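/- Let v be a normal λ-term admitting a derivation Π of x₁:b₁,…,x_m:b_m ⊢_R v : β. Then there exist multisets a₁,…,a_m, a type α, and a derivation Π' of x₁:a₁,…,x_m:a_m ⊢_R v : α with Π' ∼ Π and |Π'| + m = |a₁ … a_m α|. -/
import Mathlib


/-- Untyped λ-terms with named variables. -/
inductive Lam : Type
  | var : ℕ → Lam
  | app : Lam → Lam → Lam
  | lam : ℕ → Lam → Lam
  deriving DecidableEq

namespace Lam

/-- Substitution of `s` for the variable `x`. -/
def subst : Lam → ℕ → Lam → Lam
  | var y, x, s => if y = x then s else var y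
  | app v u, x, s => app (v.subst x s) (u.subst x s)
  | lam y t, x, s => if y = x then lam y t else lam y (t.subst x s)

/-- One-step β-reduction. -/
inductive Beta : Lam → Lam → Prop
  | beta (x : ℕ) (u t : Lam) : Beta (app (lam x u) t) (u.subst x t)
  | appL {v v' : Lam} (u : Lam) : Beta v v' → Beta (app v u) (app v' u)
  | appR (v : Lam) {u u' : Lam} : Beta u u' → Beta (app v u) (app v u')
  | lam (x : ℕ) {t t' : Lam} : Beta t t' → Beta (lam x t) (lam x t')

/-- One-step head reduction. -/
inductive Head : Lam → Lam → Prop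
  | beta (x : ℕ) (u t : Lam) : Head (app (lam x u) t) (u.subst x t)
  | app {v v' : Lam} (u : Lam) :
      Head v v' → (∀ x w, v ≠ lam x w) → Head (app v u) (app v' u)
  | lam (x : ℕ) {t t' : Lam} : Head t t' → Head (lam x t) (lam x t')

/-- Terms of the shape `(x)t₁…t_p`. -/
inductive HeadApp : Lam → Prop
  | var (x : ℕ) : HeadApp (var x)
  | app {v : Lam} (u : Lam) : HeadApp v → HeadApp (app v u)

/-- Head normal forms: `λx₁…λx_m.(x)t₁…t_p`. -/
inductive HNF : Lam → Prop
  | head {t : Lam} : HeadApp t → HNF t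
  | lam (x : ℕ) {t : Lam} : HNF t → HNF (lam x t)

def HeadNormalizable (t : Lam) : Prop :=
  ∃ t', Relation.ReflTransGen Head t t' ∧ HNF t'

def Normalizable (t : Lam) : Prop :=
  ∃ t', Relation.ReflTransGen Beta t t' ∧ ∀ u, ¬ Beta t' u

/-- The multiset of binding occurrences of variables in a term. -/
def bound : Lam → Multiset ℕ
  | var _ => 0
  | app v u => v.bound + u.bound
  | lam x t => x ::ₘ t.bound

/-- `t` respects the variable convention: every variable is bound at most once. -/
def VC (t : Lam) : Prop := t.bound.Nodup

/-- Free variables. -/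
def fv : Lam → Finset ℕ
  | var x => {x}
  | app v u => v.fv ∪ u.fv
  | lam x t => t.fv.erase x

end Lam

/-! System R: non-idempotent intersection types. -/

/-- Types over the atoms `ℕ`: `D = A ⊎ (M_fin(D) × D)` (finite multisets are
represented as lists; the application rule makes derivability invariant
under permutation). -/
inductive Ty : Type
  | atom : ℕ → Ty
  | arr : List Ty → Ty → Ty

/-- Contexts: finitely supported functions from variables to finite multisets of types. -/
abbrev Ctx := ℕ →₀ Multiset Ty

mutual
  /-- Derivations of System R. -/
  inductive Deriv : Ctx → Lam → Ty → Type
    | ax (x : ℕ) (α : Ty) : Deriv (Finsupp.single x {α}) (.var x) α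
    | lam {Γ : Ctx} {v : Lam} {α : Ty} (x : ℕ) (a : List Ty) :
        Deriv (Γ + Finsupp.single x (↑a : Multiset Ty)) v α → Γ x = 0 →
        Deriv Γ (.lam x v) (.arr a α)
    | app {Γ₀ Γ₁ : Ctx} {v u : Lam} {as : List Ty} {α : Ty} :
        Deriv Γ₀ v (.arr as α) → DerivList Γ₁ u as → Deriv (Γ₀ + Γ₁) (.app v u) α
  /-- Finite families of derivations for the argument of an application. -/
  inductive DerivList : Ctx → Lam → List Ty → Type
    | nil (u : Lam) : DerivList 0 u []
    | cons {Γ Γ' : Ctx} {u : Lam} {α : Ty} {as : List Ty} :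
        Deriv Γ u α → DerivList Γ' u as → DerivList (Γ + Γ') u (α :: as)
end

/-- Derivability in System R : `Γ ⊢_R t : α`. -/
def DerR (Γ : Ctx) (t : Lam) (α : Ty) : Prop := Nonempty (Deriv Γ t α)

noncomputable section
mutual
  /-- Size (number of rule applications) of a derivation. -/
  def Deriv.size : ∀ {Γ : Ctx} {t : Lam} {α : Ty}, Deriv Γ t α → ℕ
    | _, _, _, .ax _ _ => 1
    | _, _, _, .lam _ _ d _ => d.size + 1
    | _, _, _, .app d ds => d.size + ds.size + 1
  def DerivList.size : ∀ {Γ : Ctx} {u : Lam} {as : List Ty}, DerivList Γ u as → ℕ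
    | _, _, _, .nil _ => 0
    | _, _, _, .cons d ds => d.size + ds.size
end
end

mutual
  /-- The size `|α|` of a type. -/
  def tySize : Ty → ℕ
    | .atom _ => 1
    | .arr a α => tyAuxList a + tySize α + 1
  /-- The auxiliary size `aux(α)` of a type. -/
  def tyAux : Ty → ℕ
    | .atom _ => 0
    | .arr a α => tySizeList a + tyAux α + 1
  /-- `|a| = Σᵢ |αᵢ|` for a multiset `a = [α₁,…,α_n]`. -/
  def tySizeList : List Ty → ℕ
    | [] => 0
    | β :: bs => tySize β + tySizeList bs
  /-- `aux(a) = Σᵢ aux(αᵢ)`. -/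
  def tyAuxList : List Ty → ℕ
    | [] => 0
    | β :: bs => tyAux β + tyAuxList bs
end

/-- The type `a₁ … a_m α = (a₁, (a₂, … (a_m, α) …))`. -/
def tyOf (as : List (List Ty)) (α : Ty) : Ty := as.foldr Ty.arr α

mutual
  /-- Structural equivalence of derivations of the same λ-term: same tree shape,
  up to permuting the argument premises of application rules. -/
  inductive DEq : ∀ {Γ Γ' : Ctx} {t : Lam} {α α' : Ty}, Deriv Γ t α → Deriv Γ' t α' → Prop
    | ax {x : ℕ} {α β : Ty} : DEq (Deriv.ax x α) (Deriv.ax x β)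
    | lam {Γ Γ' : Ctx} {v : Lam} {α α' : Ty} {x : ℕ} {a a' : List Ty}
        {d : Deriv (Γ + Finsupp.single x (↑a : Multiset Ty)) v α}
        {d' : Deriv (Γ' + Finsupp.single x (↑a' : Multiset Ty)) v α'}
        {h : Γ x = 0} {h' : Γ' x = 0} :
        DEq d d' → DEq (Deriv.lam x a d h) (Deriv.lam x a' d' h')
    | app {Γ₀ Γ₁ Γ₀' Γ₁' : Ctx} {v u : Lam} {as as' : List Ty} {α α' : Ty}
        {d : Deriv Γ₀ v (.arr as α)} {d' : Deriv Γ₀' v (.arr as' α')}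
        {ds : DerivList Γ₁ u as} {ds' : DerivList Γ₁' u as'} :
        DEq d d' → DLPerm ds ds' → DEq (Deriv.app d ds) (Deriv.app d' ds')
  /-- Permutation-equivalence of families of argument derivations. -/
  inductive DLPerm : ∀ {Γ Γ' : Ctx} {u : Lam} {as as' : List Ty},
      DerivList Γ u as → DerivList Γ' u as' → Prop
    | nil {u : Lam} : DLPerm (DerivList.nil u) (DerivList.nil u)
    | cons {Γ Δ Γ' Δ' : Ctx} {u : Lam} {α α' : Ty} {as as' : List Ty}
        {d : Deriv Γ u α} {d' : Deriv Γ' u α'}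
        {ds : DerivList Δ u as} {ds' : DerivList Δ' u as'} :
        DEq d d' → DLPerm ds ds' → DLPerm (DerivList.cons d ds) (DerivList.cons d' ds')
    | swap {Γ₁ Γ₂ Γ₁' Γ₂' Δ Δ' : Ctx} {u : Lam} {α₁ α₂ α₁' α₂' : Ty} {as as' : List Ty}
        {d₁ : Deriv Γ₁ u α₁} {d₂ : Deriv Γ₂ u α₂}
        {d₁' : Deriv Γ₁' u α₁'} {d₂' : Deriv Γ₂' u α₂'}
        {ds : DerivList Δ u as} {ds' : DerivList Δ' u as'} :
        DEq d₁ d₂' → DEq d₂ d₁' → DLPerm ds ds' →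
        DLPerm (DerivList.cons d₁ (DerivList.cons d₂ ds))
               (DerivList.cons d₁' (DerivList.cons d₂' ds'))
    | trans {Γ₁ Γ₂ Γ₃ : Ctx} {u : Lam} {as₁ as₂ as₃ : List Ty}
        {l₁ : DerivList Γ₁ u as₁} {l₂ : DerivList Γ₂ u as₂} {l₃ : DerivList Γ₃ u as₃} :
        DLPerm l₁ l₂ → DLPerm l₂ l₃ → DLPerm l₁ l₃
end


/-! ### Auxiliary machinery for Statement 18 -/

section Stmt18Aux

lemma Lam.headApp_of_normal : ∀ (v : Lam), (∀ u, ¬ Lam.Beta v u) →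
    (∀ x w, v ≠ .lam x w) → Lam.HeadApp v
  | .var x, _, _ => .var x
  | .app w u, hn, _ => by
      have hw : ∀ z, ¬ Lam.Beta w z := fun z h => hn _ (.appL u h)
      have hnl : ∀ x t, w ≠ .lam x t := by
        rintro x t rfl; exact hn _ (.beta x t u)
      exact .app u (Lam.headApp_of_normal w hw hnl)
  | .lam x w, _, h => absurd rfl (h x w)

@[simp] lemma tyAux_atom (n : ℕ) : tyAux (.atom n) = 0 := by rw [tyAux]
@[simp] lemma tySize_atom (n : ℕ) : tySize (.atom n) = 1 := by rw [tySize]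
@[simp] lemma tyAux_arr (a : List Ty) (α : Ty) :
    tyAux (.arr a α) = tySizeList a + tyAux α + 1 := by rw [tyAux]
@[simp] lemma tySize_arr (a : List Ty) (α : Ty) :
    tySize (.arr a α) = tyAuxList a + tySize α + 1 := by rw [tySize]
@[simp] lemma tyAuxList_nil : tyAuxList [] = 0 := by rw [tyAuxList]
@[simp] lemma tyAuxList_cons (b : Ty) (bs : List Ty) :
    tyAuxList (b :: bs) = tyAux b + tyAuxList bs := by rw [tyAuxList]
@[simp] lemma tySizeList_nil : tySizeList [] = 0 := by rw [tySizeList]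
@[simp] lemma tySizeList_cons (b : Ty) (bs : List Ty) :
    tySizeList (b :: bs) = tySize b + tySizeList bs := by rw [tySizeList]

/-- `aux` of a multiset of types. -/
def auxM (m : Multiset Ty) : ℕ := (m.map tyAux).sum

/-- `aux` of a context. -/
def auxCtx (Γ : Ctx) : ℕ := Γ.sum fun _ m => auxM m

@[simp] lemma auxM_zero : auxM 0 = 0 := rfl
@[simp] lemma auxM_add (m n : Multiset Ty) : auxM (m + n) = auxM m + auxM n := by
  simp [auxM]
@[simp] lemma auxM_singleton (α : Ty) : auxM {α} = tyAux α := by simp [auxM]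
@[simp] lemma auxM_coe : ∀ (a : List Ty), auxM (↑a : Multiset Ty) = tyAuxList a
  | [] => rfl
  | b :: bs => by
      rw [tyAuxList_cons, ← auxM_coe bs]
      simp [auxM]

@[simp] lemma auxCtx_zero : auxCtx 0 = 0 := rfl
@[simp] lemma auxCtx_add (Γ Δ : Ctx) : auxCtx (Γ + Δ) = auxCtx Γ + auxCtx Δ :=
  Finsupp.sum_add_index (fun _ _ => rfl) (fun _ _ m n => auxM_add m n)
@[simp] lemma auxCtx_single (x : ℕ) (m : Multiset Ty) :
    auxCtx (Finsupp.single x m) = auxM m :=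
  Finsupp.sum_single_index rfl

lemma mzero_of_add {m n : Multiset Ty} (h : m + n = 0) : m = 0 ∧ n = 0 := by
  have := congrArg Multiset.card h
  simp [Multiset.card_eq_zero] at this
  exact this

@[simp] lemma Deriv.size_ax (x : ℕ) (α : Ty) : (Deriv.ax x α).size = 1 := by
  simp [Deriv.size]
@[simp] lemma Deriv.size_lam {Γ : Ctx} {v : Lam} {α : Ty} (x : ℕ) (a : List Ty)
    (d : Deriv (Γ + Finsupp.single x (↑a : Multiset Ty)) v α) (h : Γ x = 0) :
    (Deriv.lam x a d h).size = d.size + 1 := by simp [Deriv.size]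
@[simp] lemma Deriv.size_app {Γ₀ Γ₁ : Ctx} {v u : Lam} {as : List Ty} {α : Ty}
    (d : Deriv Γ₀ v (.arr as α)) (ds : DerivList Γ₁ u as) :
    (Deriv.app d ds).size = d.size + ds.size + 1 := by simp [Deriv.size]
@[simp] lemma DerivList.size_nil (u : Lam) : (DerivList.nil u).size = 0 := by
  simp [DerivList.size]
@[simp] lemma DerivList.size_cons {Γ Γ' : Ctx} {u : Lam} {α : Ty} {as : List Ty}
    (d : Deriv Γ u α) (ds : DerivList Γ' u as) :
    (DerivList.cons d ds).size = d.size + ds.size := by simp [DerivList.size]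

/-- Transport a derivation along an equality of contexts. -/
def Deriv.castCtx {Γ Δ : Ctx} {v : Lam} {α : Ty} (h : Γ = Δ) (d : Deriv Γ v α) :
    Deriv Δ v α := h ▸ d

@[simp] lemma Deriv.size_castCtx {Γ Δ : Ctx} {v : Lam} {α : Ty} (h : Γ = Δ)
    (d : Deriv Γ v α) : (d.castCtx h).size = d.size := by subst h; rfl

lemma DEq.castCtx {Γ Δ Γ₂ : Ctx} {v : Lam} {α α₂ : Ty} (h : Γ = Δ)
    {d : Deriv Γ v α} {e : Deriv Γ₂ v α₂} (hd : DEq d e) : DEq (d.castCtx h) e := by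
  subst h; exact hd

end Stmt18Aux

section Stmt18Key

mutual

/-- Key lemma for head applications: the result type may be chosen freely. -/
theorem keyH {Γ : Ctx} {v : Lam} {β : Ty} (P : Deriv Γ v β)
    (hha : Lam.HeadApp v) (hn : ∀ u, ¬ Lam.Beta v u) (τ : Ty) :
    ∃ (Γ' : Ctx) (P' : Deriv Γ' v τ), DEq P' P ∧ (∀ y, Γ y = 0 → Γ' y = 0) ∧
      P'.size + tyAux τ = auxCtx Γ' + 1 := by
  match P with
  | .ax x α =>
      refine ⟨Finsupp.single x {τ}, .ax x τ, .ax, fun y h => ?_, ?_⟩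
      · by_cases hy : x = y
        · subst hy; simp [Finsupp.single_apply] at h
        · simp [Finsupp.single_apply, hy]
      · rw [Deriv.size_ax, auxCtx_single, auxM_singleton]; omega
  | .lam x a d h => exact absurd hha (by rintro ⟨⟩)
  | @Deriv.app Γ₀ Γ₁ w u as β d ds =>
      have hw : ∀ z, ¬ Lam.Beta w z := fun z h => hn _ (.appL u h)
      have hu : ∀ z, ¬ Lam.Beta u z := fun z h => hn _ (.appR w h)
      have hhw : Lam.HeadApp w := by cases hha with | app _ h => exact h
      obtain ⟨Δ₁, as', ds', hperm, hz1, hsz1⟩ := keyL ds hu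
      obtain ⟨Δ₀, d', hdeq, hz0, hsz0⟩ := keyH d hhw hw (.arr as' τ)
      refine ⟨Δ₀ + Δ₁, .app d' ds', .app hdeq hperm, fun y h => ?_, ?_⟩
      · rw [Finsupp.add_apply] at h ⊢
        obtain ⟨h0, h1⟩ := mzero_of_add h
        rw [hz0 y h0, hz1 y h1, add_zero]
      · rw [Deriv.size_app, auxCtx_add]
        rw [tyAux_arr] at hsz0
        omega

/-- Key lemma for normal terms. -/
theorem keyN {Γ : Ctx} {v : Lam} {β : Ty} (P : Deriv Γ v β)
    (hn : ∀ u, ¬ Lam.Beta v u) :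
    ∃ (Γ' : Ctx) (α : Ty) (P' : Deriv Γ' v α), DEq P' P ∧ (∀ y, Γ y = 0 → Γ' y = 0) ∧
      P'.size = auxCtx Γ' + tySize α := by
  match P with
  | .ax x α =>
      refine ⟨Finsupp.single x {Ty.atom 0}, .atom 0, .ax x (.atom 0), .ax,
        fun y h => ?_, ?_⟩
      · by_cases hy : x = y
        · subst hy; simp [Finsupp.single_apply] at h
        · simp [Finsupp.single_apply, hy]
      · rw [Deriv.size_ax, auxCtx_single, auxM_singleton, tyAux_atom, tySize_atom]
  | @Deriv.lam Γ w α x a d h =>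
      have hw : ∀ z, ¬ Lam.Beta w z := fun z hb => hn _ (.lam x hb)
      obtain ⟨Γ'', α', d', hdeq, hz, hsz⟩ := keyN d hw
      have hctx : Γ''.erase x + Finsupp.single x (↑(Γ'' x).toList : Multiset Ty) = Γ'' := by
        rw [Multiset.coe_toList, Finsupp.erase_add_single]
      have hA : auxCtx Γ'' = auxCtx (Γ''.erase x) + tyAuxList (Γ'' x).toList := by
        conv_lhs => rw [← hctx]
        rw [auxCtx_add, auxCtx_single, auxM_coe]
      refine ⟨Γ''.erase x, .arr (Γ'' x).toList α',
        .lam x (Γ'' x).toList (d'.castCtx hctx.symm) (Finsupp.erase_same),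
        .lam (hdeq.castCtx _), fun y hy => ?_, ?_⟩
      · by_cases hxy : y = x
        · subst hxy; exact Finsupp.erase_same
        · rw [Finsupp.erase_ne hxy]
          refine hz y ?_
          rw [Finsupp.add_apply, hy, Finsupp.single_apply,
            if_neg (fun hh => hxy hh.symm), add_zero]
      · rw [Deriv.size_lam, Deriv.size_castCtx, hsz, hA, tySize_arr]
        omega
  | @Deriv.app Γ₀ Γ₁ w u as β d ds =>
      have hha : Lam.HeadApp (Lam.app w u) := by
        apply Lam.headApp_of_normal _ hn
        exact fun x t hh => Lam.noConfusion hh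
      obtain ⟨Γ', P', hdeq, hz, hsz⟩ := keyH (.app d ds) hha hn (.atom 0)
      exact ⟨Γ', .atom 0, P', hdeq, hz, by rw [tyAux_atom] at hsz; rw [tySize_atom]; omega⟩

/-- Key lemma for families of argument derivations. -/
theorem keyL {Γ : Ctx} {u : Lam} {as : List Ty} (Ps : DerivList Γ u as)
    (hn : ∀ w, ¬ Lam.Beta u w) :
    ∃ (Γ' : Ctx) (as' : List Ty) (Ps' : DerivList Γ' u as'), DLPerm Ps' Ps ∧
      (∀ y, Γ y = 0 → Γ' y = 0) ∧ Ps'.size = auxCtx Γ' + tySizeList as' := by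
  match Ps with
  | .nil u => exact ⟨0, [], .nil u, .nil, fun y _ => rfl, by simp⟩
  | .cons d ds =>
      obtain ⟨Γ₁, α', d', hdeq, hz0, hsz0⟩ := keyN d hn
      obtain ⟨Γ₂, as'', ds', hperm, hz1, hsz1⟩ := keyL ds hn
      refine ⟨Γ₁ + Γ₂, α' :: as'', .cons d' ds', .cons hdeq hperm, fun y h => ?_, ?_⟩
      · rw [Finsupp.add_apply] at h ⊢
        obtain ⟨h0, h1⟩ := mzero_of_add h
        rw [hz0 y h0, hz1 y h1, add_zero]
      · rw [DerivList.size_cons, auxCtx_add, tySizeList_cons]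
        omega

end

end Stmt18Key

section Stmt18Assemble

lemma sum_single_eq : ∀ (xs : List ℕ), xs.Nodup → ∀ (Γ : Ctx),
    (∀ y, y ∉ xs → Γ y = 0) →
    (xs.map fun x => Finsupp.single x (Γ x)).sum = Γ
  | [], _, Γ, hs => by
      ext y
      rw [(hs y (by simp) : Γ y = 0)]
      rfl
  | x :: xs, hnd, Γ, hs => by
      obtain ⟨hx, hnd'⟩ := List.nodup_cons.mp hnd
      have hs' : ∀ y, y ∉ xs → (Γ.erase x) y = 0 := by
        intro y hy
        by_cases hxy : y = x
        · subst hxy; exact Finsupp.erase_same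
        · rw [Finsupp.erase_ne hxy]
          exact hs y (by simp [hxy, hy])
      have ih := sum_single_eq xs hnd' (Γ.erase x) hs'
      have hmap : (xs.map fun y => Finsupp.single y ((Γ.erase x) y)) =
          xs.map fun y => Finsupp.single y (Γ y) := by
        apply List.map_congr_left
        intro y hy
        rw [Finsupp.erase_ne (by rintro rfl; exact hx hy)]
      rw [List.map_cons, List.sum_cons, ← hmap, ih, Finsupp.single_add_erase]

lemma zip_single_map (Γ : Ctx) : ∀ (l : List ℕ),
    List.zipWith (fun (x : ℕ) (m : Multiset Ty) => Finsupp.single x m) l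
      (l.map fun x => Γ x) = l.map fun x => Finsupp.single x (Γ x)
  | [] => rfl
  | z :: l => by
      simp only [List.map_cons, List.zipWith_cons_cons, zip_single_map Γ l]

lemma auxCtx_list_sum : ∀ (l : List Ctx), auxCtx l.sum = (l.map auxCtx).sum
  | [] => by simp
  | Γ :: l => by
      simp only [List.sum_cons, List.map_cons, auxCtx_add, auxCtx_list_sum l]

lemma auxCtx_eq (xs : List ℕ) (hnd : xs.Nodup) (Γ : Ctx) (hs : ∀ y, y ∉ xs → Γ y = 0) :
    auxCtx Γ = (xs.map fun x => auxM (Γ x)).sum := by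
  conv_lhs => rw [← sum_single_eq xs hnd Γ hs]
  rw [auxCtx_list_sum, List.map_map]
  simp [Function.comp_def]

lemma tySize_tyOf : ∀ (as : List (List Ty)) (α : Ty),
    tySize (tyOf as α) = (as.map tyAuxList).sum + tySize α + as.length
  | [], α => by simp [tyOf]
  | a :: as, α => by
      have h : tyOf (a :: as) α = .arr a (tyOf as α) := rfl
      rw [h, tySize_arr]
      have := tySize_tyOf as α
      simp only [List.map_cons, List.sum_cons, List.length_cons]
      omega

lemma zip_sum_apply_zero : ∀ (xs : List ℕ) (bs : List (Multiset Ty)) (y : ℕ), y ∉ xs →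
    ((List.zipWith (fun x b => Finsupp.single x b) xs bs).sum) y = 0
  | [], _, y, _ => rfl
  | x :: xs, [], y, _ => rfl
  | x :: xs, b :: bs, y, hy => by
      simp only [List.zipWith_cons_cons, List.sum_cons, Finsupp.add_apply]
      rw [zip_sum_apply_zero xs bs y (fun h => hy (by simp [h])),
        Finsupp.single_apply, if_neg (by rintro rfl; exact hy (by simp)), add_zero]

end Stmt18Assemble
/-- for a normal λ-term `v` and a derivation `Π` of
`x₁:b₁,…,x_m:b_m ⊢_R v : β`, there are `a₁,…,a_m`, `α` and a derivation `Π'` of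
`x₁:a₁,…,x_m:a_m ⊢_R v : α` with `Π' ∼ Π` and `|Π'| + m = |a₁ … a_m α|`. -/
theorem stmt18 (v : Lam) (hnorm : ∀ u, ¬ Lam.Beta v u)
    (xs : List ℕ) (hnd : xs.Nodup) (bs : List (Multiset Ty)) (β : Ty)
    (hlen : xs.length = bs.length)
    (P : Deriv ((List.zipWith (fun x b => Finsupp.single x b) xs bs).sum) v β) :
    ∃ (as : List (List Ty)) (α : Ty)
      (P' : Deriv ((List.zipWith (fun x a => Finsupp.single x (↑a : Multiset Ty)) xs as).sum)
              v α),
      as.length = xs.length ∧ DEq P' P ∧ P'.size + xs.length = tySize (tyOf as α) := by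
  obtain ⟨Γ', α, P', hdeq, hz, hsz⟩ := keyN P hnorm
  have hz' : ∀ y, y ∉ xs → Γ' y = 0 := fun y hy => hz y (zip_sum_apply_zero xs bs y hy)
  refine ⟨xs.map fun x => (Γ' x).toList, α, P'.castCtx ?heq, by simp, hdeq.castCtx _, ?_⟩
  case heq =>
    simp only [bind_pure_comp, List.map_eq_map, List.map_map, Function.comp_def,
      Multiset.coe_toList]
    rw [zip_single_map Γ' xs, sum_single_eq xs hnd Γ' hz']
  rw [Deriv.size_castCtx, hsz, tySize_tyOf, auxCtx_eq xs hnd Γ' hz']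
  simp only [List.map_map, Function.comp_def, List.length_map]
  have : ∀ x : ℕ, tyAuxList (Γ' x).toList = auxM (Γ' x) := by
    intro x
    rw [← auxM_coe, Multiset.coe_toList]
  simp only [this]
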